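/- arXiv:2007.14508 — 2 statements merged into one kernel-verified Lean document; each statement's English description precedes it below -/
import Mathlib

section
/- Let W_0 ∈ B^γ be a block graphon. If (f_n) is a sequence of graphons in W_Ω and f is a graphon with d_□(f_n, f) → 0, then f ∈ W_Ω. (That is, W_Ω is a closed subset of the set of graphons with respect to the cut-distance topology.) -/
open MeasureTheory Set Filter
open scoped ENNReal NNReal

noncomputable section

namespace GraphonLDP

/-- The unit square `[0,1]² ⊆ ℝ²`. -/
def unitSq : Set (ℝ × ℝ) := Set.Icc (0:ℝ) 1 ×ˢ Set.Icc (0:ℝ) 1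

/-- A graphon: a measurable, symmetric function with values in `[0,1]`. -/
def IsGraphon (f : ℝ → ℝ → ℝ) : Prop :=
  Measurable (Function.uncurry f) ∧ (∀ x y, f x y ∈ Set.Icc (0:ℝ) 1) ∧ ∀ x y, f x y = f y x

open Classical in
/-- The pointwise relative entropy `h_p(u)`, valued in `[0,∞]`
(with `h_0(0) = h_1(1) = 0`, `h_0(u) = ∞` for `u ≠ 0`, `h_1(u) = ∞` for `u ≠ 1`,
and the convention `0 log 0 = 0`, which is automatic since `Real.log 0 = 0`). -/
def relEnt (p u : ℝ) : ℝ≥0∞ :=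
  if p = 0 then (if u = 0 then 0 else ⊤)
  else if p = 1 then (if u = 1 then 0 else ⊤)
  else ENNReal.ofReal (u * Real.log (u / p) + (1 - u) * Real.log ((1 - u) / (1 - p)))

/-- The relative entropy functional `I_{W₀}(f)`, valued in `[0,∞]`. -/
def Ient (W₀ f : ℝ → ℝ → ℝ) : ℝ≥0∞ :=
  (1 / 2) * ∫⁻ q in unitSq, relEnt (W₀ q.1 q.2) (f q.1 q.2)

/-- `Ω = {(x,y) ∈ [0,1]² : 0 < W₀(x,y) < 1}`. -/
def OmegaSet (W₀ : ℝ → ℝ → ℝ) : Set (ℝ × ℝ) :=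
  {q | q ∈ unitSq ∧ W₀ q.1 q.2 ∈ Set.Ioo (0:ℝ) 1}

/-- `f ∈ W_Ω`: `f` is a graphon agreeing with `W₀` a.e. on `[0,1]² \ Ω`. -/
def MemWOmega (W₀ f : ℝ → ℝ → ℝ) : Prop :=
  IsGraphon f ∧
    ∀ᵐ q ∂(volume.restrict (unitSq \ OmegaSet W₀)), f q.1 q.2 = W₀ q.1 q.2

/-- The cut distance `d_□(f,g)`. -/
def cutDist (f g : ℝ → ℝ → ℝ) : ℝ :=
  ⨆ p : {S : Set ℝ // MeasurableSet S ∧ S ⊆ Set.Icc (0:ℝ) 1} ×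
        {T : Set ℝ // MeasurableSet T ∧ T ⊆ Set.Icc (0:ℝ) 1},
    |∫ q in ((p.1 : Set ℝ) ×ˢ (p.2 : Set ℝ)), (f q.1 q.2 - g q.1 q.2)|

/-- The set of values of `W₀` on the unit square. -/
def imageVals (W₀ : ℝ → ℝ → ℝ) : Set ℝ := {w : ℝ | ∃ q ∈ unitSq, W₀ q.1 q.2 = w}

/-- Real-valued relative entropy `h_p(u)` for `p ∈ (0,1)`. -/
def hRel (p u : ℝ) : ℝ :=
  u * Real.log (u / p) + (1 - u) * Real.log ((1 - u) / (1 - p))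

/-- `ψ_p(x) = h_p(x^{1/d})`. -/
def psi (d : ℕ) (p : ℝ) : ℝ → ℝ := fun x => hRel p (x ^ ((d : ℝ)⁻¹))

/-- The convex minorant on `[0,1]`: pointwise supremum of affine minorants. -/
def convexMinorant (F : ℝ → ℝ) (x : ℝ) : ℝ :=
  sSup {y : ℝ | ∃ a b : ℝ, (∀ z ∈ Set.Icc (0:ℝ) 1, a * z + b ≤ F z) ∧ y = a * x + b}

/-- `A⁺_ε(f,c) = {(x,y) ∈ [0,1]² : f(x,y) − c ≥ ε}`. -/
def Aplus (f : ℝ → ℝ → ℝ) (c ε : ℝ) : Set (ℝ × ℝ) :=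
  {q | q ∈ unitSq ∧ ε ≤ f q.1 q.2 - c}

/-- `A⁻_ε(f,c) = {(x,y) ∈ [0,1]² : c − f(x,y) ≥ ε}`. -/
def Aminus (f : ℝ → ℝ → ℝ) (c ε : ℝ) : Set (ℝ × ℝ) :=
  {q | q ∈ unitSq ∧ ε ≤ c - f q.1 q.2}

/-- Partial sums `γ_1 + ⋯ + γ_n`. -/
def cumSum {m : ℕ} (γ : Fin m → ℝ) (n : ℕ) : ℝ :=
  ∑ i : Fin m, if (i : ℕ) < n then γ i else 0

/-- The interval `I_j` of the block structure: `I_1 = [0,γ_1]`,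
`I_j = (γ_1+⋯+γ_{j-1}, γ_1+⋯+γ_j]` for `j ≥ 2`. -/
def blockI {m : ℕ} (γ : Fin m → ℝ) (j : Fin m) : Set ℝ :=
  if (j : ℕ) = 0 then Set.Icc 0 (cumSum γ 1)
  else Set.Ioc (cumSum γ (j : ℕ)) (cumSum γ ((j : ℕ) + 1))

/-- `γ` is a vector of positive block widths summing to `1`. -/
def GoodWidths {m : ℕ} (γ : Fin m → ℝ) : Prop :=
  (∀ i, 0 < γ i) ∧ ∑ i, γ i = 1

/-- `f` is the block graphon in `B^γ` with matrix `P`. -/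
def IsBlockGraphon {m : ℕ} (γ : Fin m → ℝ) (P : Fin m → Fin m → ℝ) (f : ℝ → ℝ → ℝ) : Prop :=
  (∀ i j, P i j ∈ Set.Icc (0:ℝ) 1) ∧ (∀ i j, P i j = P j i) ∧
    ∀ i j, ∀ x ∈ blockI γ i, ∀ y ∈ blockI γ j, f x y = P i j

/-- The homomorphism density `t(H,f)`. -/
def homDensity {v : ℕ} (H : SimpleGraph (Fin v)) [DecidableRel H.Adj] (f : ℝ → ℝ → ℝ) : ℝ :=
  ∫ x in Set.univ.pi (fun _ : Fin v => Set.Icc (0:ℝ) 1),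
    ∏ e ∈ Finset.univ.filter (fun e : Fin v × Fin v => e.1 < e.2 ∧ H.Adj e.1 e.2),
      f (x e.1) (x e.2)

/-- `‖g‖_d = (∫_{[0,1]²} g^d)^{1/d}`. -/
def normD (d : ℕ) (g : ℝ → ℝ → ℝ) : ℝ :=
  (∫ q in unitSq, (g q.1 q.2) ^ d) ^ ((d : ℝ)⁻¹)

/-- The rescaled restriction `f_{ij}` of `f` to the block `I_i × I_j`. -/
def fBlock {m : ℕ} (γ : Fin m → ℝ) (f : ℝ → ℝ → ℝ) (i j : Fin m) : ℝ → ℝ → ℝ :=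
  fun x y => f (cumSum γ (i : ℕ) + x * γ i) (cumSum γ (j : ℕ) + y * γ j)

/-- `K_{W₀}(f,a)`. -/
def Kfun (W₀ f a : ℝ → ℝ → ℝ) : ℝ :=
  ∫ q in unitSq,
    (a q.1 q.2 * f q.1 q.2 -
      Real.log (W₀ q.1 q.2 * Real.exp (a q.1 q.2) + 1 - W₀ q.1 q.2))

/-- Symmetric functions in `L²([0,1]²)`. -/
def SymL2 (a : ℝ → ℝ → ℝ) : Prop :=
  Measurable (Function.uncurry a) ∧
    (∀ᵐ q ∂(volume.restrict unitSq), a q.1 q.2 = a q.2 q.1) ∧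
    IntegrableOn (fun q : ℝ × ℝ => (a q.1 q.2) ^ 2) unitSq

/-- The matrix `P` with the entries `(a,b)` and `(b,a)` replaced by `q`. -/
def modMat {m : ℕ} (P : Fin m → Fin m → ℝ) (a b : Fin m) (q : ℝ) :
    Fin m → Fin m → ℝ :=
  fun i j => if (i = a ∧ j = b) ∨ (i = b ∧ j = a) then q else P i j

/-- The block `I_a × I_b` of the block graphon `W₀ = (P i j)` is relevant:
`P a b > 0` and replacing the entries `P a b = P b a` by any strictly smaller
(nonnegative) value strictly decreases the homomorphism density of `H`. -/
def RelevantBlock {v m : ℕ} (H : SimpleGraph (Fin v)) [DecidableRel H.Adj]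
    (γ : Fin m → ℝ) (P : Fin m → Fin m → ℝ) (W₀ : ℝ → ℝ → ℝ) (a b : Fin m) : Prop :=
  0 < P a b ∧ ∀ q : ℝ, 0 ≤ q → q < P a b →
    ∀ g : ℝ → ℝ → ℝ, IsGraphon g → IsBlockGraphon γ (modMat P a b q) g →
      homDensity H g < homDensity H W₀

open Classical in
/-- `g^{+η}`: equal to `min (g + η) 1` on `Ω` and to `g` off `Ω`. -/
def gplus (W₀ g : ℝ → ℝ → ℝ) (η : ℝ) : ℝ → ℝ → ℝ := fun x y =>
  if (x, y) ∈ OmegaSet W₀ then min (g x y + η) 1 else g x y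

open Classical in
/-- The graphon `f_{a,b,c}^γ`: `a` on `[0,γ]²`, `c` on `(γ,1]²`, `b` elsewhere. -/
def fabc (γ a b c : ℝ) : ℝ → ℝ → ℝ := fun x y =>
  if x ∈ Set.Icc (0:ℝ) γ ∧ y ∈ Set.Icc (0:ℝ) γ then a
  else if x ∈ Set.Ioc γ 1 ∧ y ∈ Set.Ioc γ 1 then c
  else b

/-- Membership in the two-block family `B^{(γ,1-γ)} = {f_{a,b,c}^γ : a,b,c ∈ [0,1]}`. -/
def memB2 (γ : ℝ) (f : ℝ → ℝ → ℝ) : Prop :=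
  ∃ a b c : ℝ, a ∈ Set.Icc (0:ℝ) 1 ∧ b ∈ Set.Icc (0:ℝ) 1 ∧ c ∈ Set.Icc (0:ℝ) 1 ∧
    f = fabc γ a b c

/-- The diagonal blocks `[0,γ]² ∪ (γ,1]²`. -/
def diagBlocks (γ : ℝ) : Set (ℝ × ℝ) :=
  (Set.Icc (0:ℝ) γ ×ˢ Set.Icc (0:ℝ) γ) ∪ (Set.Ioc γ 1 ×ˢ Set.Ioc γ 1)

/-- The operator norm `‖f‖_op = sup {‖T_f u‖₂ : ‖u‖₂ ≤ 1}` of the kernel operator `T_f`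
on `L²([0,1])`. -/
def opNorm (f : ℝ → ℝ → ℝ) : ℝ :=
  sSup {c : ℝ | ∃ u : ℝ → ℝ, Measurable u ∧
    eLpNorm u 2 (volume.restrict (Set.Icc (0:ℝ) 1)) ≤ 1 ∧
    c = (∫ x in Set.Icc (0:ℝ) 1, (∫ y in Set.Icc (0:ℝ) 1, f x y * u y) ^ 2) ^ ((2:ℝ)⁻¹)}

lemma cumSum_nonneg {m : ℕ} {γ : Fin m → ℝ} (hγ : GoodWidths γ) (n : ℕ) :
    0 ≤ cumSum γ n :=
  Finset.sum_nonneg fun i _ => by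
    split
    · exact (hγ.1 i).le
    · exact le_rfl
lemma cumSum_le_one {m : ℕ} {γ : Fin m → ℝ} (hγ : GoodWidths γ) (n : ℕ) :
    cumSum γ n ≤ 1 := by
  rw [← hγ.2]
  refine Finset.sum_le_sum fun i _ => ?_
  split
  · exact le_rfl
  · exact (hγ.1 i).le

lemma cumSum_m {m : ℕ} {γ : Fin m → ℝ} (hγ : GoodWidths γ) :
    cumSum γ m = 1 := by
  rw [← hγ.2]
  exact Finset.sum_congr rfl fun i _ => by simp [i.isLt]

lemma blockI_subset {m : ℕ} {γ : Fin m → ℝ} (hγ : GoodWidths γ) (j : Fin m) :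
    blockI γ j ⊆ Set.Icc (0:ℝ) 1 := by
  unfold blockI; split
  · exact Set.Icc_subset_Icc le_rfl (cumSum_le_one hγ 1)
  · intro x hx
    exact ⟨le_of_lt (lt_of_le_of_lt (cumSum_nonneg hγ _) hx.1),
      hx.2.trans (cumSum_le_one hγ _)⟩

lemma measurableSet_blockI {m : ℕ} (γ : Fin m → ℝ) (j : Fin m) :
    MeasurableSet (blockI γ j) := by
  unfold blockI; split
  · exact measurableSet_Icc
  · exact measurableSet_Ioc

lemma exists_mem_blockI {m : ℕ} {γ : Fin m → ℝ} (hγ : GoodWidths γ) {x : ℝ}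
    (hx : x ∈ Set.Icc (0:ℝ) 1) : ∃ j : Fin m, x ∈ blockI γ j := by
  classical
  have hm : 0 < m := by
    rcases Nat.eq_zero_or_pos m with h | h
    · exfalso; have h2 := hγ.2; subst h; simp at h2
    · exact h
  have hex : ∃ n, x ≤ cumSum γ (n + 1) :=
    ⟨m - 1, by rw [show m - 1 + 1 = m by omega, cumSum_m hγ]; exact hx.2⟩
  set n := Nat.find hex with hn
  have hn1 : x ≤ cumSum γ (n + 1) := Nat.find_spec hex
  have hnm : n < m := by
    have : n ≤ m - 1 := Nat.find_le (by rw [show m - 1 + 1 = m by omega, cumSum_m hγ]; exact hx.2)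
    omega
  refine ⟨⟨n, hnm⟩, ?_⟩
  by_cases h0 : n = 0
  · unfold blockI
    rw [if_pos (by simpa using h0)]
    exact ⟨hx.1, by rw [show (1:ℕ) = n + 1 by omega]; exact hn1⟩
  · unfold blockI
    rw [if_neg (by simpa using h0)]
    refine ⟨?_, hn1⟩
    by_contra hle
    push_neg at hle
    have := Nat.find_min hex (m := n - 1) (by omega)
    rw [show n - 1 + 1 = n by omega] at this
    exact this hle

lemma volume_unitSq_lt_top : volume unitSq < ⊤ :=
  (isCompact_Icc.prod isCompact_Icc).measure_lt_top

lemma integrableOn_graphonlike {g : ℝ → ℝ → ℝ}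
    (hm : Measurable (Function.uncurry g)) (hb : ∀ x y, g x y ∈ Set.Icc (0:ℝ) 1)
    {s : Set (ℝ × ℝ)} (hs : s ⊆ unitSq) :
    IntegrableOn (fun q : ℝ × ℝ => g q.1 q.2) s := by
  have hfin : IsFiniteMeasure (volume.restrict s) :=
    ⟨by rw [Measure.restrict_apply_univ]
        exact lt_of_le_of_lt (measure_mono hs) volume_unitSq_lt_top⟩
  refine ⟨(hm.aestronglyMeasurable).restrict, ?_⟩
  exact HasFiniteIntegral.of_bounded (C := 1)
    (ae_of_all _ fun q => by
      rw [Real.norm_eq_abs, abs_le]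
      exact ⟨by linarith [(hb q.1 q.2).1], (hb q.1 q.2).2⟩)


lemma abs_setIntegral_le_cutDist {f g : ℝ → ℝ → ℝ} (hf : IsGraphon f) (hg : IsGraphon g)
    {S T : Set ℝ} (hS : MeasurableSet S) (hS1 : S ⊆ Set.Icc (0:ℝ) 1)
    (hT : MeasurableSet T) (hT1 : T ⊆ Set.Icc (0:ℝ) 1) :
    |∫ q in S ×ˢ T, (f q.1 q.2 - g q.1 q.2)| ≤ cutDist f g := by
  have hbdd : BddAbove (Set.range fun p : {S : Set ℝ // MeasurableSet S ∧ S ⊆ Set.Icc (0:ℝ) 1} ×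
      {T : Set ℝ // MeasurableSet T ∧ T ⊆ Set.Icc (0:ℝ) 1} =>
      |∫ q in ((p.1 : Set ℝ) ×ˢ (p.2 : Set ℝ)), (f q.1 q.2 - g q.1 q.2)|) := by
    refine ⟨1, ?_⟩
    rintro _ ⟨p, rfl⟩
    have hsub : ((p.1 : Set ℝ) ×ˢ (p.2 : Set ℝ)) ⊆ unitSq :=
      Set.prod_mono p.1.2.2 p.2.2.2
    have hlt : volume ((p.1 : Set ℝ) ×ˢ (p.2 : Set ℝ)) < ⊤ :=
      lt_of_le_of_lt (measure_mono hsub) volume_unitSq_lt_top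
    have hmeas : AEStronglyMeasurable (fun q : ℝ × ℝ => f q.1 q.2 - g q.1 q.2)
        (volume.restrict ((p.1 : Set ℝ) ×ˢ (p.2 : Set ℝ))) :=
      ((hf.1.sub hg.1).aestronglyMeasurable).restrict
    have hbound := norm_setIntegral_le_of_norm_le_const (C := 1) (f := fun q : ℝ × ℝ => f q.1 q.2 - g q.1 q.2) hlt
      (fun q _ => by
        rw [Real.norm_eq_abs, abs_le]
        constructor
        · linarith [(hf.2.1 q.1 q.2).1, (hg.2.1 q.1 q.2).2]
        · linarith [(hf.2.1 q.1 q.2).2, (hg.2.1 q.1 q.2).1])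
    rw [Real.norm_eq_abs] at hbound
    refine hbound.trans ?_
    rw [one_mul]
    have h1 : volume ((p.1 : Set ℝ) ×ˢ (p.2 : Set ℝ)) ≤ 1 := by
      refine le_trans (measure_mono hsub) ?_
      have : volume unitSq = 1 := by
        rw [unitSq, show (volume : Measure (ℝ × ℝ)) = (volume.prod volume) from rfl,
          Measure.prod_prod, Real.volume_Icc]
        norm_num
      rw [this]
    calc (volume ((p.1 : Set ℝ) ×ˢ (p.2 : Set ℝ))).toReal
        ≤ (1 : ℝ≥0∞).toReal := ENNReal.toReal_mono (by simp) h1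
      _ = 1 := by simp
  exact le_ciSup hbdd (⟨⟨S, hS, hS1⟩, ⟨T, hT, hT1⟩⟩)

/-- `W_Ω` is closed with respect to the cut distance. -/
theorem stmt3 {m : ℕ} (γ : Fin m → ℝ) (hγ : GoodWidths γ)
    (W₀ : ℝ → ℝ → ℝ) (P : Fin m → Fin m → ℝ)
    (hW : IsGraphon W₀) (hWb : IsBlockGraphon γ P W₀)
    (F : ℕ → ℝ → ℝ → ℝ) (hF : ∀ n, MemWOmega W₀ (F n))
    (f : ℝ → ℝ → ℝ) (hf : IsGraphon f)
    (hconv : Filter.Tendsto (fun n => cutDist (F n) f) Filter.atTop (nhds 0)) :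
    MemWOmega W₀ f := by
  classical
  refine ⟨hf, ?_⟩
  have main : ∀ i j : Fin m, (P i j = 0 ∨ P i j = 1) →
      ∀ᵐ q ∂(volume.restrict (blockI γ i ×ˢ blockI γ j)), f q.1 q.2 = W₀ q.1 q.2 := by
    intro i j hij
    set B : Set (ℝ × ℝ) := blockI γ i ×ˢ blockI γ j with hB
    have hBmeas : MeasurableSet B := (measurableSet_blockI γ i).prod (measurableSet_blockI γ j)
    have hBsub : B ⊆ unitSq := Set.prod_mono (blockI_subset hγ i) (blockI_subset hγ j)
    have hW0B : ∀ q ∈ B, W₀ q.1 q.2 = P i j := fun q hq => hWb.2.2 i j q.1 hq.1 q.2 hq.2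
    have hBsub' : B ⊆ unitSq \ OmegaSet W₀ := by
      intro q hq
      refine ⟨hBsub hq, ?_⟩
      intro hΩ
      have h2 : W₀ q.1 q.2 ∈ Set.Ioo (0:ℝ) 1 := hΩ.2
      rw [hW0B q hq] at h2
      rcases hij with h | h <;> rw [h] at h2 <;> simp at h2
    have hFW : ∀ n, ∀ᵐ q ∂(volume.restrict B), F n q.1 q.2 = W₀ q.1 q.2 :=
      fun n => ae_restrict_of_ae_restrict_of_subset hBsub' (hF n).2
    have hintf : IntegrableOn (fun q : ℝ × ℝ => f q.1 q.2) B :=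
      integrableOn_graphonlike hf.1 hf.2.1 hBsub
    have hintW : IntegrableOn (fun q : ℝ × ℝ => W₀ q.1 q.2) B :=
      integrableOn_graphonlike hW.1 hW.2.1 hBsub
    have hkey : ∫ q in B, (f q.1 q.2 - W₀ q.1 q.2) = 0 := by
      have hle : ∀ n, |∫ q in B, (f q.1 q.2 - W₀ q.1 q.2)| ≤ cutDist (F n) f := by
        intro n
        have h1 : ∫ q in B, (f q.1 q.2 - W₀ q.1 q.2) = ∫ q in B, (f q.1 q.2 - F n q.1 q.2) :=
          integral_congr_ae ((hFW n).mono fun q hq => by dsimp only; rw [hq])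
        have h2 : ∫ q in B, (f q.1 q.2 - F n q.1 q.2)
            = - ∫ q in B, (F n q.1 q.2 - f q.1 q.2) := by
          rw [← integral_neg]
          exact integral_congr_ae (ae_of_all _ fun q => by ring)
        rw [h1, h2, abs_neg]
        exact abs_setIntegral_le_cutDist (hF n).1 hf (measurableSet_blockI γ i)
          (blockI_subset hγ i) (measurableSet_blockI γ j) (blockI_subset hγ j)
      have hle0 : |∫ q in B, (f q.1 q.2 - W₀ q.1 q.2)| ≤ 0 := ge_of_tendsto' hconv hle
      exact abs_eq_zero.1 (le_antisymm hle0 (abs_nonneg _))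
    rcases hij with h | h
    · have hnn : 0 ≤ᵐ[volume.restrict B] fun q : ℝ × ℝ => f q.1 q.2 - W₀ q.1 q.2 :=
        ae_restrict_of_forall_mem hBmeas fun q hq => by
          have hw := hW0B q hq
          simp only [Pi.zero_apply]
          rw [hw, h]
          linarith [(hf.2.1 q.1 q.2).1]
      have hz := (integral_eq_zero_iff_of_nonneg_ae hnn (hintf.sub hintW)).1 hkey
      exact hz.mono fun q hq => by
        have : f q.1 q.2 - W₀ q.1 q.2 = 0 := hq
        linarith
    · have hnn : 0 ≤ᵐ[volume.restrict B] fun q : ℝ × ℝ => W₀ q.1 q.2 - f q.1 q.2 :=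
        ae_restrict_of_forall_mem hBmeas fun q hq => by
          have hw := hW0B q hq
          simp only [Pi.zero_apply]
          rw [hw, h]
          linarith [(hf.2.1 q.1 q.2).2]
      have hkey' : ∫ q in B, (W₀ q.1 q.2 - f q.1 q.2) = 0 := by
        have h2 : ∫ q in B, (W₀ q.1 q.2 - f q.1 q.2)
            = - ∫ q in B, (f q.1 q.2 - W₀ q.1 q.2) := by
          rw [← integral_neg]
          exact integral_congr_ae (ae_of_all _ fun q => by ring)
        rw [h2, hkey, neg_zero]
      have hz := (integral_eq_zero_iff_of_nonneg_ae hnn (hintW.sub hintf)).1 hkey'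
      exact hz.mono fun q hq => by
        have : W₀ q.1 q.2 - f q.1 q.2 = 0 := hq
        linarith
  have cover : unitSq \ OmegaSet W₀ ⊆ ⋃ p : Fin m × Fin m,
      (if (P p.1 p.2 = 0 ∨ P p.1 p.2 = 1) then blockI γ p.1 ×ˢ blockI γ p.2 else ∅) := by
    intro q hq
    have hqu : q ∈ Set.Icc (0:ℝ) 1 ×ˢ Set.Icc (0:ℝ) 1 := hq.1
    obtain ⟨i, hi⟩ := exists_mem_blockI hγ hqu.1
    obtain ⟨j, hj⟩ := exists_mem_blockI hγ hqu.2
    have hw := hWb.2.2 i j q.1 hi q.2 hj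
    have hP01 : P i j = 0 ∨ P i j = 1 := by
      have hIcc := hWb.1 i j
      have hnot : W₀ q.1 q.2 ∉ Set.Ioo (0:ℝ) 1 := fun hm' => hq.2 ⟨hq.1, hm'⟩
      rw [hw] at hnot
      by_contra hc
      push_neg at hc
      exact hnot ⟨lt_of_le_of_ne hIcc.1 (Ne.symm hc.1), lt_of_le_of_ne hIcc.2 hc.2⟩
    refine Set.mem_iUnion.2 ⟨(i, j), ?_⟩
    rw [if_pos hP01]
    exact ⟨hi, hj⟩
  refine ae_restrict_of_ae_restrict_of_subset cover ?_
  rw [ae_restrict_iUnion_iff]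
  intro p
  by_cases hp : P p.1 p.2 = 0 ∨ P p.1 p.2 = 1
  · rw [if_pos hp]
    exact main p.1 p.2 hp
  · rw [if_neg hp]
    simp


end GraphonLDP
end
end

section
/- Let f, g be graphons and ε > 0. Define S_β^+ = {(x,y) ∈ [0,1]^2 : f(x,y) − g(x,y) ≥ β} and S_β^- = {(x,y) ∈ [0,1]^2 : g(x,y) − f(x,y) ≥ β}. (1) If f ≥ g pointwise and d_□(f,g) ≥ ε, then λ(S_{ε/2}^+) > ε/2. (2) If d_□(f,g) > ε, then λ(S_{ε/4}^+) ≥ ε/4 or λ(S_{ε/4}^-) ≥ ε/4. -/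
open MeasureTheory Set Filter
open scoped ENNReal NNReal

noncomputable section

namespace GraphonLDP

lemma measurableSet_unitSq : MeasurableSet unitSq := measurableSet_Icc.prod measurableSet_Icc

lemma vol_unitSq : volume unitSq = 1 := by
  rw [unitSq, show (volume : Measure (ℝ×ℝ)) = (volume : Measure ℝ).prod volume from rfl,
    Measure.prod_prod, Real.volume_Icc]
  norm_num

lemma meas_sub (f g : ℝ → ℝ → ℝ) (hf : IsGraphon f) (hg : IsGraphon g) :
    Measurable (fun q : ℝ × ℝ => f q.1 q.2 - g q.1 q.2) := hf.1.sub hg.1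

lemma intOn_sub (f g : ℝ → ℝ → ℝ) (hf : IsGraphon f) (hg : IsGraphon g)
    (E : Set (ℝ×ℝ)) (hE : E ⊆ unitSq) :
    IntegrableOn (fun q : ℝ × ℝ => f q.1 q.2 - g q.1 q.2) E := by
  have h1 : IntegrableOn (fun _ : ℝ×ℝ => (1:ℝ)) E := by
    refine integrableOn_const (LT.lt.ne ?_)
    exact lt_of_le_of_lt (le_trans (measure_mono hE) (le_of_eq vol_unitSq)) ENNReal.one_lt_top
  refine Integrable.mono' h1 ((meas_sub f g hf hg).aestronglyMeasurable) ?_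
  refine Filter.Eventually.of_forall fun q => ?_
  have h1 := hf.2.1 q.1 q.2
  have h2 := hg.2.1 q.1 q.2
  simp only [Set.mem_Icc] at h1 h2
  rw [Real.norm_eq_abs, abs_sub_le_iff]; constructor <;> linarith

lemma meas_A (f g : ℝ → ℝ → ℝ) (hf : IsGraphon f) (hg : IsGraphon g) (δ : ℝ) :
    MeasurableSet {q : ℝ × ℝ | q ∈ unitSq ∧ δ ≤ f q.1 q.2 - g q.1 q.2} := by
  have : {q : ℝ × ℝ | q ∈ unitSq ∧ δ ≤ f q.1 q.2 - g q.1 q.2}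
      = unitSq ∩ (fun q : ℝ × ℝ => f q.1 q.2 - g q.1 q.2) ⁻¹' (Set.Ici δ) := rfl
  rw [this]
  exact measurableSet_unitSq.inter ((meas_sub f g hf hg) measurableSet_Ici)

lemma key (f g : ℝ → ℝ → ℝ) (hf : IsGraphon f) (hg : IsGraphon g)
    (E : Set (ℝ×ℝ)) (hEm : MeasurableSet E) (hE : E ⊆ unitSq) (δ : ℝ) :
    (∫ q in E, (f q.1 q.2 - g q.1 q.2)) ≤
      (volume (E ∩ {q : ℝ × ℝ | q ∈ unitSq ∧ δ ≤ f q.1 q.2 - g q.1 q.2})).toReal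
        + δ * (volume (E \ {q : ℝ × ℝ | q ∈ unitSq ∧ δ ≤ f q.1 q.2 - g q.1 q.2})).toReal := by
  set A := {q : ℝ × ℝ | q ∈ unitSq ∧ δ ≤ f q.1 q.2 - g q.1 q.2} with hA
  have hAm : MeasurableSet A := meas_A f g hf hg δ
  have hI1 : IntegrableOn (fun q : ℝ × ℝ => f q.1 q.2 - g q.1 q.2) (E ∩ A) :=
    intOn_sub f g hf hg _ (fun q hq => hE hq.1)
  have hI2 : IntegrableOn (fun q : ℝ × ℝ => f q.1 q.2 - g q.1 q.2) (E \ A) :=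
    intOn_sub f g hf hg _ (fun q hq => hE hq.1)
  have hsplit := setIntegral_union (Set.disjoint_sdiff_inter (s := E) (t := A)).symm
      (hEm.diff hAm) hI1 hI2
  rw [Set.inter_union_diff] at hsplit
  rw [hsplit]
  have hvol1 : volume (E ∩ A) < ⊤ :=
    lt_of_le_of_lt (le_trans (measure_mono (fun q (hq : q ∈ E ∩ A) => hE hq.1)) (le_of_eq vol_unitSq)) ENNReal.one_lt_top
  have hvol2 : volume (E \ A) < ⊤ :=
    lt_of_le_of_lt (le_trans (measure_mono (fun q (hq : q ∈ E \ A) => hE hq.1)) (le_of_eq vol_unitSq)) ENNReal.one_lt_top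
  have hb1 : (∫ q in E ∩ A, (f q.1 q.2 - g q.1 q.2)) ≤ (volume (E ∩ A)).toReal := by
    have hc : IntegrableOn (fun _ : ℝ × ℝ => (1:ℝ)) (E ∩ A) := integrableOn_const hvol1.ne
    have := setIntegral_mono_on hI1 hc (hEm.inter hAm) (fun q hq => by
      have h1 := hf.2.1 q.1 q.2
      have h2 := hg.2.1 q.1 q.2
      simp only [Set.mem_Icc] at h1 h2
      show f q.1 q.2 - g q.1 q.2 ≤ 1
      linarith)
    simpa [measureReal_def] using this
  have hb2 : (∫ q in E \ A, (f q.1 q.2 - g q.1 q.2)) ≤ δ * (volume (E \ A)).toReal := by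
    have hc : IntegrableOn (fun _ : ℝ × ℝ => δ) (E \ A) := integrableOn_const hvol2.ne
    have := setIntegral_mono_on hI2 hc (hEm.diff hAm) (fun q hq => by
      have hnA : ¬ (q ∈ unitSq ∧ δ ≤ f q.1 q.2 - g q.1 q.2) := hq.2
      have hU : q ∈ unitSq := hE hq.1
      show f q.1 q.2 - g q.1 q.2 ≤ δ
      by_contra h
      push_neg at h
      exact hnA ⟨hU, le_of_lt h⟩)
    simp only [setIntegral_const, smul_eq_mul, measureReal_def] at this
    linarith [this, mul_comm δ (volume (E \ A)).toReal]
  linarith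

lemma key2 (f g : ℝ → ℝ → ℝ) (hf : IsGraphon f) (hg : IsGraphon g) (ε : ℝ) (hε : 0 < ε)
    (S T : Set ℝ) (hSm : MeasurableSet S) (hTm : MeasurableSet T)
    (hS : S ⊆ Set.Icc (0:ℝ) 1) (hT : T ⊆ Set.Icc (0:ℝ) 1)
    (h : ε < ∫ q in S ×ˢ T, (f q.1 q.2 - g q.1 q.2)) :
    ENNReal.ofReal (ε/4) ≤ volume {q : ℝ×ℝ | q ∈ unitSq ∧ ε/4 ≤ f q.1 q.2 - g q.1 q.2} := by
  set A := {q : ℝ×ℝ | q ∈ unitSq ∧ ε/4 ≤ f q.1 q.2 - g q.1 q.2} with hAdef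
  have hE : S ×ˢ T ⊆ unitSq := Set.prod_mono hS hT
  have hkey := key f g hf hg (S ×ˢ T) (hSm.prod hTm) hE (ε/4)
  have hAfin : volume A ≠ ⊤ := by
    refine (lt_of_le_of_lt ?_ ENNReal.one_lt_top).ne
    rw [← vol_unitSq]
    exact measure_mono (fun q hq => hq.1)
  have h1 : volume (S ×ˢ T ∩ A) ≤ volume A := measure_mono Set.inter_subset_right
  have h2 : volume (S ×ˢ T \ A) ≤ 1 := by
    rw [← vol_unitSq]; exact measure_mono (fun q hq => hE hq.1)
  have ht1 : (volume (S ×ˢ T ∩ A)).toReal ≤ (volume A).toReal := ENNReal.toReal_mono hAfin h1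
  have ht2 : (volume (S ×ˢ T \ A)).toReal ≤ 1 := by
    have := ENNReal.toReal_mono (by simp) h2
    simpa using this
  have ht0 : 0 ≤ (volume (S ×ˢ T \ A)).toReal := ENNReal.toReal_nonneg
  have hfinal : ε/4 ≤ (volume A).toReal := by nlinarith
  exact ENNReal.ofReal_le_of_le_toReal hfinal

/-- large cut distance forces pointwise differences on a large set. -/
theorem stmt5 (f g : ℝ → ℝ → ℝ) (hf : IsGraphon f) (hg : IsGraphon g)
    (ε : ℝ) (hε : 0 < ε) :
    ((∀ x ∈ Set.Icc (0:ℝ) 1, ∀ y ∈ Set.Icc (0:ℝ) 1, g x y ≤ f x y) →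
      ε ≤ cutDist f g →
      ENNReal.ofReal (ε / 2) <
        volume {q | q ∈ unitSq ∧ ε / 2 ≤ f q.1 q.2 - g q.1 q.2}) ∧
    (ε < cutDist f g →
      ENNReal.ofReal (ε / 4) ≤
          volume {q | q ∈ unitSq ∧ ε / 4 ≤ f q.1 q.2 - g q.1 q.2} ∨
        ENNReal.ofReal (ε / 4) ≤
          volume {q | q ∈ unitSq ∧ ε / 4 ≤ g q.1 q.2 - f q.1 q.2}) := by
  constructor
  · intro hmono hcut
    set A := {q : ℝ×ℝ | q ∈ unitSq ∧ ε/2 ≤ f q.1 q.2 - g q.1 q.2} with hAdef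
    have hAm : MeasurableSet A := meas_A f g hf hg _
    have hAsub : A ⊆ unitSq := fun q hq => hq.1
    have hIU : IntegrableOn (fun q : ℝ×ℝ => f q.1 q.2 - g q.1 q.2) unitSq :=
      intOn_sub f g hf hg _ subset_rfl
    have hnonneg : ∀ q ∈ unitSq, 0 ≤ f q.1 q.2 - g q.1 q.2 := fun q hq => by
      have := hmono q.1 hq.1 q.2 hq.2; linarith
    have hcd : cutDist f g ≤ ∫ q in unitSq, (f q.1 q.2 - g q.1 q.2) := by
      haveI : Nonempty ({S : Set ℝ // MeasurableSet S ∧ S ⊆ Set.Icc (0:ℝ) 1} ×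
          {T : Set ℝ // MeasurableSet T ∧ T ⊆ Set.Icc (0:ℝ) 1}) :=
        ⟨⟨⟨Set.Icc 0 1, measurableSet_Icc, subset_rfl⟩,
          ⟨Set.Icc 0 1, measurableSet_Icc, subset_rfl⟩⟩⟩
      rw [cutDist]
      refine ciSup_le fun p => ?_
      have hsub : (p.1 : Set ℝ) ×ˢ (p.2 : Set ℝ) ⊆ unitSq :=
        Set.prod_mono p.1.2.2 p.2.2.2
      have hm : MeasurableSet ((p.1 : Set ℝ) ×ˢ (p.2 : Set ℝ)) := p.1.2.1.prod p.2.2.1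
      have h0 : 0 ≤ ∫ q in (p.1 : Set ℝ) ×ˢ (p.2 : Set ℝ), (f q.1 q.2 - g q.1 q.2) :=
        setIntegral_nonneg hm (fun q hq => hnonneg q (hsub hq))
      rw [abs_of_nonneg h0]
      refine setIntegral_mono_set hIU ?_ (HasSubset.Subset.eventuallyLE hsub)
      exact (ae_restrict_iff' measurableSet_unitSq).2 (Filter.Eventually.of_forall hnonneg)
    have hε1 : ε ≤ ∫ q in unitSq, (f q.1 q.2 - g q.1 q.2) := le_trans hcut hcd
    have hle1 : (∫ q in unitSq, (f q.1 q.2 - g q.1 q.2)) ≤ 1 := by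
      have hc : IntegrableOn (fun _ : ℝ×ℝ => (1:ℝ)) unitSq :=
        integrableOn_const (by rw [vol_unitSq]; exact ENNReal.one_ne_top)
      have := setIntegral_mono_on hIU hc measurableSet_unitSq (fun q hq => by
        have h1 := hf.2.1 q.1 q.2
        have h2 := hg.2.1 q.1 q.2
        simp only [Set.mem_Icc] at h1 h2
        show f q.1 q.2 - g q.1 q.2 ≤ 1
        linarith)
      simpa [vol_unitSq, measureReal_def] using this
    have hkey := key f g hf hg unitSq measurableSet_unitSq subset_rfl (ε/2)
    rw [← hAdef, Set.inter_eq_self_of_subset_right hAsub] at hkey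
    have hAfin : volume A ≠ ⊤ := by
      refine (lt_of_le_of_lt ?_ ENNReal.one_lt_top).ne
      rw [← vol_unitSq]; exact measure_mono hAsub
    have hdfin : volume (unitSq \ A) ≠ ⊤ := by
      refine (lt_of_le_of_lt ?_ ENNReal.one_lt_top).ne
      rw [← vol_unitSq]; exact measure_mono Set.diff_subset
    have hsum' := measure_inter_add_diff (μ := volume) unitSq hAm
    rw [Set.inter_eq_self_of_subset_right hAsub, vol_unitSq] at hsum'
    have hreal : (volume A).toReal + (volume (unitSq \ A)).toReal = 1 := by
      rw [← ENNReal.toReal_add hAfin hdfin, hsum']; simp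
    show ENNReal.ofReal (ε / 2) < volume A
    by_contra hcon
    push_neg at hcon
    have ht : (volume A).toReal ≤ ε/2 := by
      have := ENNReal.toReal_mono ENNReal.ofReal_ne_top hcon
      rwa [ENNReal.toReal_ofReal (by linarith)] at this
    have hs0 : 0 ≤ (volume (unitSq \ A)).toReal := ENNReal.toReal_nonneg
    nlinarith
  · intro hcut
    haveI : Nonempty ({S : Set ℝ // MeasurableSet S ∧ S ⊆ Set.Icc (0:ℝ) 1} ×
        {T : Set ℝ // MeasurableSet T ∧ T ⊆ Set.Icc (0:ℝ) 1}) :=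
      ⟨⟨⟨Set.Icc 0 1, measurableSet_Icc, subset_rfl⟩,
        ⟨Set.Icc 0 1, measurableSet_Icc, subset_rfl⟩⟩⟩
    rw [cutDist] at hcut
    obtain ⟨p, hp⟩ := exists_lt_of_lt_ciSup hcut
    rcases le_or_gt 0 (∫ q in ((p.1 : Set ℝ) ×ˢ (p.2 : Set ℝ)), (f q.1 q.2 - g q.1 q.2))
      with h0 | h0
    · left
      refine key2 f g hf hg ε hε _ _ p.1.2.1 p.2.2.1 p.1.2.2 p.2.2.2 ?_
      rwa [abs_of_nonneg h0] at hp
    · right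
      refine key2 g f hg hf ε hε _ _ p.1.2.1 p.2.2.1 p.1.2.2 p.2.2.2 ?_
      have heq : (∫ q in ((p.1 : Set ℝ) ×ˢ (p.2 : Set ℝ)), (g q.1 q.2 - f q.1 q.2))
          = - ∫ q in ((p.1 : Set ℝ) ×ˢ (p.2 : Set ℝ)), (f q.1 q.2 - g q.1 q.2) := by
        rw [← integral_neg]
        congr 1
        ext q
        ring
      rw [heq]
      rwa [abs_of_neg h0] at hp


end GraphonLDP
end
end
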